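/- Combinatorial core of the reflection lemma (Lemma on faces in the inner 3-ball): let n be a positive integer and let a, b be elements of ℤ/nℤ with a ≠ b. Define permutations σ and τ of ℤ/nℤ by σ(k) = a − k and τ(k) = b − k, and assume both are fixed-point free: σ(k) ≠ k and τ(k) ≠ k for every k ∈ ℤ/nℤ. Then all orbits of the subgroup of permutations of ℤ/nℤ generated by σ and τ have the same cardinality; that is, for all x, y ∈ ℤ/nℤ, the orbit of x under ⟨σ, τ⟩ and the orbit of y under ⟨σ, τ⟩ have equal cardinality. -/

import Mathlib

/-!
The group generated by the reflections `k ↦ a - k` and `k ↦ b - k` consists of the translations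
by multiples of `d = b - a` and the reflections `k ↦ c - k` with `c ∈ a + ℤ • d`. According to the
parity of the multiple, such a reflection is conjugate by a translation to one of the two
generators, so it has no fixed point. Hence the group acts freely, and every orbit is in bijection
with the group.
-/

open Equiv MulAction

theorem MulAction.card_orbit_of_isCancelSMul (G : Type*) {α : Type*} [Group G] [MulAction G α]
    [IsCancelSMul G α] (x : α) : Nat.card (orbit G x) = Nat.card G := by
  rw [Nat.card_coe_set_eq, ← index_stabilizer, IsCancelSMul.stabilizer_eq_bot, Subgroup.index_bot]

section Reflections

variable {A : Type*} [AddCommGroup A] {a b : A}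

theorem exists_eq_addRight_or_eq_subLeft_of_mem_closure {g : Perm A}
    (hg : g ∈ Subgroup.closure {Equiv.subLeft a, Equiv.subLeft b}) :
    ∃ m : ℤ, g = Equiv.addRight (m • (b - a)) ∨ g = Equiv.subLeft (a + m • (b - a)) := by
  induction hg using Subgroup.closure_induction with
  | mem g hg =>
    rcases hg with rfl | rfl
    · exact ⟨0, .inr (by simp)⟩
    · exact ⟨1, .inr (by simp)⟩
  | one => exact ⟨0, .inl (by ext; simp)⟩
  | mul g g' _ _ ih ih' =>
    obtain ⟨m, rfl | rfl⟩ := ih <;> obtain ⟨m', rfl | rfl⟩ := ih'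
    · exact ⟨m' + m, .inl (by ext; simp [Perm.mul_apply]; module)⟩
    · exact ⟨m' + m, .inr (by ext; simp [Perm.mul_apply]; module)⟩
    · exact ⟨m - m', .inr (by ext; simp [Perm.mul_apply]; module)⟩
    · exact ⟨m - m', .inl (by ext; simp [Perm.mul_apply]; module)⟩
  | inv g _ ih =>
    obtain ⟨m, rfl | rfl⟩ := ih
    · exact ⟨-m, .inl (by ext; simp [Perm.inv_def])⟩
    · exact ⟨m, .inr (by ext; simp [Perm.inv_def]; module)⟩

theorem subLeft_add_zsmul_sub_apply_ne_self (ha : ∀ k, Equiv.subLeft a k ≠ k)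
    (hb : ∀ k, Equiv.subLeft b k ≠ k) (m : ℤ) (k : A) :
    Equiv.subLeft (a + m • (b - a)) k ≠ k := by
  intro hk
  rw [Equiv.subLeft_apply] at hk
  obtain ⟨s, rfl | rfl⟩ := Int.even_or_odd' m
  · refine ha (k - s • (b - a)) ?_
    rw [Equiv.subLeft_apply]
    linear_combination (norm := module) hk
  · refine hb (k - s • (b - a)) ?_
    rw [Equiv.subLeft_apply]
    linear_combination (norm := module) hk

theorem isCancelSMul_closure_subLeft (ha : ∀ k, Equiv.subLeft a k ≠ k)
    (hb : ∀ k, Equiv.subLeft b k ≠ k) :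
    IsCancelSMul (Subgroup.closure {Equiv.subLeft a, Equiv.subLeft b}) A := by
  refine isCancelSMul_iff_eq_one_of_smul_eq.mpr fun ⟨g, hg⟩ x hx ↦ Subtype.ext ?_
  change g x = x at hx
  obtain ⟨m, rfl | rfl⟩ := exists_eq_addRight_or_eq_subLeft_of_mem_closure hg
  · have hm : m • (b - a) = 0 := by simpa using hx
    ext
    simp [hm]
  · exact absurd hx (subLeft_add_zsmul_sub_apply_ne_self ha hb m x)

end Reflections

theorem reflection_lemma_orbits_same_card_general
    (n : ℕ) (a b : ZMod n)
    (σ τ : Equiv.Perm (ZMod n))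
    (hσ : ∀ k : ZMod n, σ k = a - k) (hτ : ∀ k : ZMod n, τ k = b - k)
    (hσfree : ∀ k : ZMod n, σ k ≠ k) (hτfree : ∀ k : ZMod n, τ k ≠ k)
    (x y : ZMod n) :
    Nat.card (MulAction.orbit (Subgroup.closure ({σ, τ} : Set (Equiv.Perm (ZMod n)))) x) =
      Nat.card (MulAction.orbit (Subgroup.closure ({σ, τ} : Set (Equiv.Perm (ZMod n)))) y) := by
  obtain rfl : σ = Equiv.subLeft a := Equiv.ext hσ
  obtain rfl : τ = Equiv.subLeft b := Equiv.ext hτ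
  have := isCancelSMul_closure_subLeft hσfree hτfree
  rw [card_orbit_of_isCancelSMul, card_orbit_of_isCancelSMul]

/-- Combinatorial core of the reflection lemma: if `σ, τ` are the fixed-point-free
"reflections" `k ↦ a - k` and `k ↦ b - k` of `ℤ/nℤ` with `a ≠ b`, then all orbits of the
subgroup of permutations generated by `σ` and `τ` have the same cardinality. -/
theorem reflection_lemma_orbits_same_card
    (n : ℕ) (hn : 0 < n) (a b : ZMod n) (hab : a ≠ b)
    (σ τ : Equiv.Perm (ZMod n))
    (hσ : ∀ k : ZMod n, σ k = a - k) (hτ : ∀ k : ZMod n, τ k = b - k)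
    (hσfree : ∀ k : ZMod n, σ k ≠ k) (hτfree : ∀ k : ZMod n, τ k ≠ k)
    (x y : ZMod n) :
    Nat.card (MulAction.orbit (Subgroup.closure ({σ, τ} : Set (Equiv.Perm (ZMod n)))) x) =
      Nat.card (MulAction.orbit (Subgroup.closure ({σ, τ} : Set (Equiv.Perm (ZMod n)))) y) :=
  reflection_lemma_orbits_same_card_general n a b σ τ hσ hτ hσfree hτfree x y
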